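/- arXiv:2107.06581 — 3 statements merged into one kernel-verified Lean document; each statement's English description precedes it below -/
import Mathlib

section
/- Under the granular sieving selection rule with a valid Lipschitz bound M₀, the intersection ⋂_k C_k equals exactly the set of global minimizers of f on C: every point of the intersection is a global minimizer, and every global minimizer belongs to every C_k. -/
/-- Under the granular sieving selection rule with a valid Lipschitz bound `M₀`, the
intersection `⋂ C_k` equals exactly the set of global minimizers of `f` on `C`. -/
theorem granular_sieving_stmt8 {n : ℕ} (C : Set (EuclideanSpace ℝ (Fin n)))
    (f : EuclideanSpace ℝ (Fin n) → ℝ) (M₀ : ℝ)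
    (hC : IsCompact C)
    (hf : ∀ x ∈ C, ∀ y ∈ C, |f x - f y| ≤ M₀ * dist x y)
    (l : ℕ → ℕ) (P : (k : ℕ) → Fin (l k) → Set (EuclideanSpace ℝ (Fin n)))
    (x : (k : ℕ) → (i : Fin (l k)) → EuclideanSpace ℝ (Fin n))
    (Cs : ℕ → Set (EuclideanSpace ℝ (Fin n)))
    (δ v : ℕ → ℝ)
    (hC0 : Cs 0 = C)
    (hcover : ∀ k, Cs k = ⋃ i, P k i)
    (hPne : ∀ k i, (P k i).Nonempty)
    (hPcomp : ∀ k i, IsCompact (P k i))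
    (hdiam : ∀ k i, ∀ y ∈ P k i, ∀ z ∈ P k i, dist y z ≤ δ k)
    (hx : ∀ k i, x k i ∈ P k i)
    (hv : ∀ k, IsLeast {r : ℝ | ∃ i, r = f (x k i)} (v k))
    (hnext : ∀ k, Cs (k + 1) = ⋃ i ∈ {i | f (x k i) ≤ v k + δ k * M₀}, P k i)
    (hδ : Filter.Tendsto δ Filter.atTop (nhds 0)) :
    (⋂ k, Cs k) = {z ∈ C | ∀ y ∈ C, f z ≤ f y} := by
  have hidx : ∀ k, Nonempty (Fin (l k)) := by
    intro k
    obtain ⟨i, _⟩ := (hv k).1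
    exact ⟨i⟩
  have hCsub : ∀ k, Cs (k + 1) ⊆ Cs k := by
    intro k z hz
    rw [hnext k] at hz
    rw [hcover k]
    simp only [Set.mem_iUnion] at hz ⊢
    obtain ⟨i, _, hi⟩ := hz
    exact ⟨i, hi⟩
  have hCsC : ∀ k, Cs k ⊆ C := by
    intro k
    induction k with
    | zero => rw [hC0]
    | succ k ih => exact (hCsub k).trans ih
  have hxC : ∀ k i, x k i ∈ C := by
    intro k i
    exact hCsC k (by rw [hcover k]; exact Set.mem_iUnion.2 ⟨i, hx k i⟩)
  have hδ0 : ∀ k, 0 ≤ δ k := by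
    intro k
    obtain ⟨i⟩ := hidx k
    have := hdiam k i (x k i) (hx k i) (x k i) (hx k i)
    simpa using this
  have hA : ∀ k, ∃ i, f (x k i) ≤ v k + δ k * M₀ := by
    intro k
    obtain ⟨i⟩ := hidx (k + 1)
    have hz : x (k + 1) i ∈ Cs (k + 1) := by
      rw [hcover (k + 1)]; exact Set.mem_iUnion.2 ⟨i, hx _ i⟩
    rw [hnext k] at hz
    simp only [Set.mem_iUnion, Set.mem_setOf_eq] at hz
    obtain ⟨j, hj, _⟩ := hz
    exact ⟨j, hj⟩
  have hB : ∀ k, 0 ≤ δ k * M₀ := by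
    intro k
    obtain ⟨i, hi⟩ := hA k
    have hvi : v k ≤ f (x k i) := (hv k).2 ⟨i, rfl⟩
    linarith
  have hkey : ∀ k (d : ℝ), 0 ≤ d → d ≤ δ k → M₀ * d ≤ δ k * M₀ := by
    intro k d hd hdk
    rcases le_or_gt 0 M₀ with h | h
    · nlinarith
    · nlinarith [hB k]
  -- a bound for any point of a piece relative to its representative
  have hpt : ∀ k i, ∀ z ∈ P k i, f z ≤ f (x k i) + δ k * M₀ ∧ f (x k i) ≤ f z + δ k * M₀ := by
    intro k i z hz
    have hzC : z ∈ C := hCsC k (by rw [hcover k]; exact Set.mem_iUnion.2 ⟨i, hz⟩)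
    have h2 : |f (x k i) - f z| ≤ M₀ * dist (x k i) z := hf _ (hxC k i) _ hzC
    have h3 : dist (x k i) z ≤ δ k := hdiam k i _ (hx k i) _ hz
    have h4 : M₀ * dist (x k i) z ≤ δ k * M₀ := hkey k _ dist_nonneg h3
    have h5 := abs_le.1 h2
    constructor <;> linarith [h5.1, h5.2]
  -- global minimizers stay in every Cs k
  have hmin_mem : ∀ z ∈ C, (∀ y ∈ C, f z ≤ f y) → ∀ k, z ∈ Cs k := by
    intro z hzC hzmin k
    induction k with
    | zero => rw [hC0]; exact hzC
    | succ k ih =>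
      rw [hcover k] at ih
      obtain ⟨i, hi⟩ := Set.mem_iUnion.1 ih
      rw [hnext k]
      refine Set.mem_iUnion₂.2 ⟨i, ?_, hi⟩
      obtain ⟨j, hj⟩ := (hv k).1
      have h1 : f z ≤ v k := hj ▸ hzmin _ (hxC k j)
      have h2 := (hpt k i z hi).2
      show f (x k i) ≤ v k + δ k * M₀
      linarith
  ext z
  simp only [Set.mem_iInter, Set.mem_setOf_eq]
  constructor
  · intro hz
    have hzC : z ∈ C := by have := hz 0; rwa [hC0] at this
    have hCne : C.Nonempty := ⟨z, hzC⟩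
    have hcont : ContinuousOn f C := by
      have : LipschitzOnWith (Real.toNNReal |M₀|) f C := by
        apply LipschitzOnWith.of_dist_le_mul
        intro a ha b hb
        rw [Real.dist_eq, Real.coe_toNNReal _ (abs_nonneg _)]
        calc |f a - f b| ≤ M₀ * dist a b := hf a ha b hb
          _ ≤ |M₀| * dist a b := by
              apply mul_le_mul_of_nonneg_right (le_abs_self M₀) dist_nonneg
      exact this.continuousOn
    obtain ⟨w, hwC, hw⟩ := hC.exists_isMinOn hCne hcont
    have hwmin : ∀ y ∈ C, f w ≤ f y := fun y hy => isMinOn_iff.1 hw y hy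
    refine ⟨hzC, fun y hy => ?_⟩
    have hzw : f z ≤ f w := by
      have hk : ∀ k, f z ≤ f w + 3 * (δ k * M₀) := by
        intro k
        have hz1 := hz (k + 1)
        rw [hnext k] at hz1
        simp only [Set.mem_iUnion, Set.mem_setOf_eq] at hz1
        obtain ⟨i, hicond, hiz⟩ := hz1
        have h1 := (hpt k i z hiz).1
        have hwk : w ∈ Cs k := hmin_mem w hwC hwmin k
        rw [hcover k] at hwk
        obtain ⟨j, hjw⟩ := Set.mem_iUnion.1 hwk
        have h2 := (hpt k j w hjw).2
        have h3 : v k ≤ f (x k j) := (hv k).2 ⟨j, rfl⟩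
        linarith
      have hlim : Filter.Tendsto (fun k => f w + 3 * (δ k * M₀)) Filter.atTop
          (nhds (f w + 3 * (0 * M₀))) :=
        Filter.Tendsto.const_add _ ((hδ.mul_const M₀).const_mul 3)
      have hlim' : Filter.Tendsto (fun k => f w + 3 * (δ k * M₀)) Filter.atTop
          (nhds (f w)) := by simpa using hlim
      exact ge_of_tendsto' hlim' hk
    exact hzw.trans (hwmin y hy)
  · rintro ⟨hzC, hzmin⟩ k
    exact hmin_mem z hzC hzmin k
end

section
/- Pseudo-M convergence (Theorem 2(i)): For any M > 0 (not necessarily a Lipschitz bound of f), the granular sieving algorithm run with M in place of M₀ produces a decreasing sequence of nonempty compact sets C_k^M whose intersection C̃^M is nonempty, and f is constant on C̃^M; its constant value v^M satisfies f(C̃^M) = {v^M}. -/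
/-- Pseudo-M convergence (Theorem 2(i)): for any `M > 0` (not necessarily a Lipschitz
bound), the granular sieving algorithm run with `M` yields a nonempty intersection
`C̃^M = ⋂ C_k^M` on which `f` is constant: `f(C̃^M) = {v^M}` for some value `v^M`. -/
theorem granular_sieving_stmt10 {n : ℕ} (C : Set (EuclideanSpace ℝ (Fin n)))
    (f : EuclideanSpace ℝ (Fin n) → ℝ) (M : ℝ)
    (hM : 0 < M)
    (hC : IsCompact C)
    (hf : ContinuousOn f C)
    (l : ℕ → ℕ) (P : (k : ℕ) → Fin (l k) → Set (EuclideanSpace ℝ (Fin n)))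
    (x : (k : ℕ) → (i : Fin (l k)) → EuclideanSpace ℝ (Fin n))
    (Cs : ℕ → Set (EuclideanSpace ℝ (Fin n)))
    (δ v : ℕ → ℝ)
    (hC0 : Cs 0 = C)
    (hcover : ∀ k, Cs k = ⋃ i, P k i)
    (hPne : ∀ k i, (P k i).Nonempty)
    (hPcomp : ∀ k i, IsCompact (P k i))
    (hdiam : ∀ k i, ∀ y ∈ P k i, ∀ z ∈ P k i, dist y z ≤ δ k)
    (hx : ∀ k i, x k i ∈ P k i)
    (hv : ∀ k, IsLeast {r : ℝ | ∃ i, r = f (x k i)} (v k))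
    (hnext : ∀ k, Cs (k + 1) = ⋃ i ∈ {i | f (x k i) ≤ v k + δ k * M}, P k i)
    (hδ : Filter.Tendsto δ Filter.atTop (nhds 0)) :
    (⋂ k, Cs k).Nonempty ∧ ∃ vM : ℝ, f '' (⋂ k, Cs k) = {vM} := by
  classical
  have hsub : ∀ k, Cs (k + 1) ⊆ Cs k := by
    intro k
    rw [hnext k, hcover k]
    exact Set.iUnion₂_subset fun i _ => Set.subset_iUnion _ i
  have hCsC : ∀ k, Cs k ⊆ C := by
    intro k
    induction k with
    | zero => rw [hC0]
    | succ k ih => exact (hsub k).trans ih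
  have hcomp : ∀ k, IsCompact (Cs k) := by
    intro k
    rw [hcover k]
    exact isCompact_iUnion (hPcomp k)
  have hne : ∀ k, (Cs k).Nonempty := by
    intro k
    obtain ⟨i, -⟩ := (hv k).1
    obtain ⟨p, hp⟩ := hPne k i
    exact ⟨p, by rw [hcover k]; exact Set.mem_iUnion.2 ⟨i, hp⟩⟩
  have hInter : (⋂ k, Cs k).Nonempty :=
    IsCompact.nonempty_iInter_of_sequence_nonempty_isCompact_isClosed Cs hsub hne
      (hcomp 0) (fun k => (hcomp k).isClosed)
  refine ⟨hInter, ?_⟩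
  obtain ⟨y0, hy0⟩ := hInter
  refine ⟨f y0, ?_⟩
  have key : ∀ z ∈ ⋂ k, Cs k, f z = f y0 := by
    intro z hz
    have huc := hC.uniformContinuousOn_of_continuous hf
    rw [Metric.uniformContinuousOn_iff] at huc
    have hdist : ∀ ε > 0, |f z - f y0| < ε := by
      intro ε hε
      obtain ⟨δ', hδ', hδ'e⟩ := huc (ε / 4) (by linarith)
      set r : ℝ := min δ' (ε / (2 * M)) with hr
      have hrpos : 0 < r := lt_min hδ' (by positivity)
      obtain ⟨N, hN⟩ := Metric.tendsto_atTop.1 hδ r hrpos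
      have hδN : |δ N| < r := by simpa [Real.dist_eq] using hN N le_rfl
      have hδN1 : δ N < δ' := lt_of_le_of_lt (le_abs_self _) (hδN.trans_le (min_le_left _ _))
      have hδN2 : δ N * M < ε / 2 := by
        have h2 : δ N < ε / (2 * M) :=
          lt_of_le_of_lt (le_abs_self _) (hδN.trans_le (min_le_right _ _))
        calc δ N * M < ε / (2 * M) * M := by nlinarith
          _ = ε / 2 := by field_simp
      -- z and y0 belong to Cs (N+1)
      have hzN : z ∈ Cs (N + 1) := Set.mem_iInter.1 hz (N + 1)
      have hy0N : y0 ∈ Cs (N + 1) := Set.mem_iInter.1 hy0 (N + 1)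
      rw [hnext N] at hzN hy0N
      obtain ⟨i, hi_sel, hziP⟩ := Set.mem_iUnion₂.1 hzN
      obtain ⟨j, hj_sel, hy0P⟩ := Set.mem_iUnion₂.1 hy0N
      have hxiC : x N i ∈ C := hCsC N (by rw [hcover N]; exact Set.mem_iUnion.2 ⟨i, hx N i⟩)
      have hxjC : x N j ∈ C := hCsC N (by rw [hcover N]; exact Set.mem_iUnion.2 ⟨j, hx N j⟩)
      have hzC : z ∈ C := hCsC (N + 1) (by rw [hnext N]; exact Set.mem_iUnion₂.2 ⟨i, hi_sel, hziP⟩)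
      have hy0C : y0 ∈ C := hCsC (N + 1) (by rw [hnext N]; exact Set.mem_iUnion₂.2 ⟨j, hj_sel, hy0P⟩)
      have hdz : dist z (x N i) < δ' := lt_of_le_of_lt (hdiam N i z hziP (x N i) (hx N i)) hδN1
      have hdy : dist y0 (x N j) < δ' := lt_of_le_of_lt (hdiam N j y0 hy0P (x N j) (hx N j)) hδN1
      have h1 : |f z - f (x N i)| < ε / 4 := by
        have := hδ'e z hzC (x N i) hxiC hdz
        simpa [Real.dist_eq] using this
      have h2 : |f y0 - f (x N j)| < ε / 4 := by
        have := hδ'e y0 hy0C (x N j) hxjC hdy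
        simpa [Real.dist_eq] using this
      have hvi : v N ≤ f (x N i) := (hv N).2 ⟨i, rfl⟩
      have hvj : v N ≤ f (x N j) := (hv N).2 ⟨j, rfl⟩
      have hui : f (x N i) ≤ v N + δ N * M := hi_sel
      have huj : f (x N j) ≤ v N + δ N * M := hj_sel
      rw [abs_lt] at h1 h2 ⊢
      constructor <;> linarith [h1.1, h1.2, h2.1, h2.2]
    by_contra hcon
    have h0 : 0 < |f z - f y0| := abs_pos.2 (sub_ne_zero.2 hcon)
    exact lt_irrefl _ (hdist _ h0)
  apply Set.Subset.antisymm
  · rintro _ ⟨z, hz, rfl⟩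
    exact key z hz
  · rintro _ rfl
    exact ⟨y0, hy0, rfl⟩
end

section
/- If M ≥ M₀ where M₀ is a Lipschitz constant of f on compact C, then the pseudo-M granular sieving algorithm yields the true solution: v^M equals the global minimum of f on C, and C̃^M equals the set of global minimizers. -/
/-- If `M ≥ M₀`, a Lipschitz bound of `f` on compact `C`, then the pseudo-M granular
sieving algorithm yields the true solution: `f(C̃^M)` is the singleton of the global
minimum, and `C̃^M = ⋂ C_k` equals the set of global minimizers. -/
theorem granular_sieving_stmt12 {n : ℕ} (C : Set (EuclideanSpace ℝ (Fin n)))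
    (f : EuclideanSpace ℝ (Fin n) → ℝ) (M₀ M : ℝ)
    (hC : IsCompact C)
    (hf : ∀ x ∈ C, ∀ y ∈ C, |f x - f y| ≤ M₀ * dist x y)
    (hM : M₀ ≤ M)
    (l : ℕ → ℕ) (P : (k : ℕ) → Fin (l k) → Set (EuclideanSpace ℝ (Fin n)))
    (x : (k : ℕ) → (i : Fin (l k)) → EuclideanSpace ℝ (Fin n))
    (Cs : ℕ → Set (EuclideanSpace ℝ (Fin n)))
    (δ v : ℕ → ℝ)
    (hC0 : Cs 0 = C)
    (hcover : ∀ k, Cs k = ⋃ i, P k i)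
    (hPne : ∀ k i, (P k i).Nonempty)
    (hPcomp : ∀ k i, IsCompact (P k i))
    (hdiam : ∀ k i, ∀ y ∈ P k i, ∀ z ∈ P k i, dist y z ≤ δ k)
    (hx : ∀ k i, x k i ∈ P k i)
    (hv : ∀ k, IsLeast {r : ℝ | ∃ i, r = f (x k i)} (v k))
    (hnext : ∀ k, Cs (k + 1) = ⋃ i ∈ {i | f (x k i) ≤ v k + δ k * M}, P k i)
    (hδ : Filter.Tendsto δ Filter.atTop (nhds 0)) :
    (⋂ k, Cs k) = {z ∈ C | ∀ y ∈ C, f z ≤ f y} ∧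
      ∀ m : ℝ, IsLeast (f '' C) m → f '' (⋂ k, Cs k) = {m} := by

  have hFin : ∀ k, Nonempty (Fin (l k)) := by
    intro k
    obtain ⟨i, -⟩ := (hv k).1
    exact ⟨i⟩
  have hPsub : ∀ k i, P k i ⊆ Cs k := by
    intro k i
    rw [hcover k]
    exact Set.subset_iUnion _ i
  have hmono : ∀ k, Cs (k + 1) ⊆ Cs k := by
    intro k z hz
    rw [hnext k] at hz
    simp only [Set.mem_iUnion] at hz
    obtain ⟨i, -, hzP⟩ := hz
    exact hPsub k i hzP
  have hsubC : ∀ k, Cs k ⊆ C := by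
    intro k
    induction k with
    | zero => rw [hC0]
    | succ k ih => exact (hmono k).trans ih
  have hxC : ∀ k i, x k i ∈ C := fun k i => hsubC k (hPsub k i (hx k i))
  have hδ0 : ∀ k, 0 ≤ δ k := by
    intro k
    obtain ⟨i⟩ := hFin k
    have := hdiam k i (x k i) (hx k i) (x k i) (hx k i)
    simpa using this
  have hCsne : ∀ k, (Cs k).Nonempty := by
    intro k
    obtain ⟨i⟩ := hFin k
    exact ⟨x k i, hPsub k i (hx k i)⟩
  have hCne : C.Nonempty := hC0 ▸ hCsne 0
  have main : (⋂ k, Cs k) = {z ∈ C | ∀ y ∈ C, f z ≤ f y} := by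
    by_cases hM0 : 0 ≤ M
    · -- main case
      have hfM : ∀ a ∈ C, ∀ b ∈ C, f a - f b ≤ M * dist a b := by
        intro a ha b hb
        calc f a - f b ≤ |f a - f b| := le_abs_self _
          _ ≤ M₀ * dist a b := hf a ha b hb
          _ ≤ M * dist a b := mul_le_mul_of_nonneg_right hM dist_nonneg
      -- any global minimizer stays in every Cs k
      have hkeep : ∀ z ∈ C, (∀ y ∈ C, f z ≤ f y) → ∀ k, z ∈ Cs k := by
        intro z hzC hzmin k
        induction k with
        | zero => rw [hC0]; exact hzC
        | succ k ih =>
          rw [hcover k] at ih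
          obtain ⟨i, hzP⟩ := Set.mem_iUnion.1 ih
          have hvz : f z ≤ v k := by
            obtain ⟨j, hj⟩ := (hv k).1
            rw [hj]
            exact hzmin _ (hxC k j)
          have hfi : f (x k i) ≤ v k + δ k * M := by
            have h1 : f (x k i) - f z ≤ M * dist (x k i) z :=
              hfM _ (hxC k i) _ hzC
            have h2 : dist (x k i) z ≤ δ k := hdiam k i _ (hx k i) _ hzP
            have h3 : M * dist (x k i) z ≤ M * δ k :=
              mul_le_mul_of_nonneg_left h2 hM0
            nlinarith
          rw [hnext k]
          exact Set.mem_biUnion hfi hzP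
      -- existence of a global minimizer
      have hcont : ContinuousOn f C := by
        refine (LipschitzOnWith.of_dist_le_mul (K := Real.toNNReal M₀) ?_).continuousOn
        intro a ha b hb
        rw [Real.dist_eq]
        exact (hf a ha b hb).trans
          (mul_le_mul_of_nonneg_right (Real.le_coe_toNNReal M₀) dist_nonneg)
      obtain ⟨z₀, hz₀C, hz₀min⟩ := hC.exists_isMinOn hCne hcont
      have hz₀min' : ∀ y ∈ C, f z₀ ≤ f y := fun y hy => hz₀min hy
      have hz₀all : ∀ k, z₀ ∈ Cs k := hkeep z₀ hz₀C hz₀min'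
      -- v k is close to the minimum value
      have hvle : ∀ k, v k ≤ f z₀ + M * δ k := by
        intro k
        have hz := hz₀all k
        rw [hcover k] at hz
        obtain ⟨j, hzP⟩ := Set.mem_iUnion.1 hz
        have h1 : v k ≤ f (x k j) := (hv k).2 ⟨j, rfl⟩
        have h2 : f (x k j) - f z₀ ≤ M * dist (x k j) z₀ :=
          hfM _ (hxC k j) _ hz₀C
        have h3 : M * dist (x k j) z₀ ≤ M * δ k :=
          mul_le_mul_of_nonneg_left (hdiam k j _ (hx k j) _ hzP) hM0
        linarith
      -- any point of the intersection is a global minimizer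
      have hinter : ∀ z, z ∈ (⋂ k, Cs k) → f z ≤ f z₀ := by
        intro z hz
        have hb : ∀ k, f z ≤ f z₀ + 3 * M * δ k := by
          intro k
          have hz1 : z ∈ Cs (k + 1) := Set.mem_iInter.1 hz (k + 1)
          rw [hnext k] at hz1
          simp only [Set.mem_iUnion] at hz1
          obtain ⟨i, hi, hzP⟩ := hz1
          have hiC : f (x k i) ≤ v k + δ k * M := hi
          have h1 : f z - f (x k i) ≤ M * dist z (x k i) :=
            hfM _ (hsubC 0 (hC0 ▸ (Set.mem_iInter.1 hz 0 : z ∈ Cs 0)) : z ∈ C) _ (hxC k i)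
          have h2 : M * dist z (x k i) ≤ M * δ k :=
            mul_le_mul_of_nonneg_left (hdiam k i _ hzP _ (hx k i)) hM0
          have h4 := hvle k
          nlinarith
        have htend : Filter.Tendsto (fun k => f z₀ + 3 * M * δ k)
            Filter.atTop (nhds (f z₀)) := by
          have : Filter.Tendsto (fun k => f z₀ + 3 * M * δ k)
              Filter.atTop (nhds (f z₀ + 3 * M * 0)) :=
            Filter.Tendsto.add tendsto_const_nhds (Filter.Tendsto.const_mul _ hδ)
          simpa using this
        exact ge_of_tendsto' htend hb
      ext z
      simp only [Set.mem_setOf_eq, Set.mem_iInter]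
      constructor
      · intro hz
        have hzC : z ∈ C := hC0 ▸ hz 0
        refine ⟨hzC, fun y hy => ?_⟩
        have := hinter z (Set.mem_iInter.2 hz)
        exact this.trans (hz₀min' y hy)
      · rintro ⟨hzC, hzmin⟩ k
        exact hkeep z hzC hzmin k
    · -- degenerate case: M < 0 forces C to be a subsingleton
      push_neg at hM0
      have hM₀neg : M₀ < 0 := lt_of_le_of_lt hM hM0
      have hsub : ∀ a ∈ C, ∀ b ∈ C, a = b := by
        intro a ha b hb
        have h1 : (0 : ℝ) ≤ M₀ * dist a b := (abs_nonneg _).trans (hf a ha b hb)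
        have h2 : dist a b ≤ 0 := by nlinarith [dist_nonneg (x := a) (y := b)]
        exact eq_of_dist_eq_zero (le_antisymm h2 dist_nonneg)
      obtain ⟨z₀, hz₀⟩ := hCne
      have hCeq : C = {z₀} := by
        ext a
        constructor
        · intro ha; exact hsub a ha z₀ hz₀
        · rintro rfl; exact hz₀
      have hCs : ∀ k, Cs k = {z₀} := by
        intro k
        obtain ⟨w, hw⟩ := hCsne k
        have hwC : w ∈ C := hsubC k hw
        have : w = z₀ := hsub w hwC z₀ hz₀
        apply Set.eq_singleton_iff_nonempty_unique_mem.2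
        exact ⟨⟨w, hw⟩, fun a ha => hsub a (hsubC k ha) z₀ hz₀⟩
      have h1 : (⋂ k, Cs k) = {z₀} := by
        simp only [hCs]
        exact Set.iInter_const _
      rw [h1, hCeq]
      ext a
      simp only [Set.mem_singleton_iff, Set.mem_setOf_eq]
      constructor
      · rintro rfl
        refine ⟨rfl, fun y hy => ?_⟩
        have : y = a := hy
        rw [this]
      · rintro ⟨ha, -⟩
        exact ha
  refine ⟨main, fun m hm => ?_⟩
  obtain ⟨zm, hzmC, hzm⟩ := hm.1
  rw [main]
  ext r
  simp only [Set.mem_image, Set.mem_setOf_eq, Set.mem_singleton_iff]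
  constructor
  · rintro ⟨z, ⟨hzC, hzmin⟩, rfl⟩
    have h1 : f z ≤ m := hzm ▸ hzmin zm hzmC
    have h2 : m ≤ f z := hm.2 ⟨z, hzC, rfl⟩
    linarith
  · rintro rfl
    refine ⟨zm, ⟨hzmC, fun y hy => ?_⟩, hzm⟩
    rw [hzm]
    exact hm.2 ⟨y, hy, rfl⟩
end
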